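/- Let L = {(0, y) : y ∈ k̄} ⊆ k̄² and p ∈ L. Let φ ∈ Aut(𝔸²) and ℓ ≥ 1 be such that φ^ℓ(L) = L, the sets φ^i(L) for 0 ≤ i ≤ ℓ−1 are pairwise distinct, and the Zariski closure of O_φ(p) in k̄² equals the union of the sets φ^i(L) for 0 ≤ i ≤ ℓ−1. Let G_p = {ψ ∈ Aut(𝔸²) : ψ(L) = L and ψ(p) = p} and let B = Aut(𝔸², O_{φ^ℓ}(p)), where O_{φ^ℓ}(p) = {φ^{ℓn}(p) : n ∈ ℤ}. Then Aut(𝔸², O_φ(p)) equals the intersection, over i = 0, …, ℓ−1, of the sets {φⁿ∘γ∘φ^{−i} : n ∈ ℤ, γ ∈ G_p ∩ B}. -/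

import Mathlib

open MvPolynomial

noncomputable section

/-- Points of the affine plane over the algebraic closure of `k`. -/
abbrev Pt (k : Type*) [Field k] : Type _ := Fin 2 → AlgebraicClosure k

/-- Plane automorphisms over `k`, modeled as `k`-algebra automorphisms of `k[x,y]`. -/
abbrev PlaneAut (k : Type*) [Field k] : Type _ :=
  MvPolynomial (Fin 2) k ≃ₐ[k] MvPolynomial (Fin 2) k

/-- The embedding of `k` in its algebraic closure. -/
abbrev emb (k : Type*) [Field k] : k →+* AlgebraicClosure k :=
  algebraMap k (AlgebraicClosure k)

variable {k : Type*} [Field k]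

/-- The action of a plane automorphism on the points of the plane over `k̄`:
the point map of `φ` is `q ↦ (f(q), g(q))` where `f = φ.symm X₀`, `g = φ.symm X₁`
(so that `actp` is a left action of the automorphism group on points). -/
def actp (φ : PlaneAut k) (q : Pt k) : Pt k :=
  fun i => aeval q (φ.symm (X i))

/-- The Zariski closure of a set of points of `k̄²`: the zero locus of the ideal of all
polynomials with coefficients in `k̄` vanishing on it. -/
def zclos (Δ : Set (Pt k)) : Set (Pt k) :=
  zeroLocus (AlgebraicClosure k) (vanishingIdeal (AlgebraicClosure k) Δ)

/-- `Δ̂` : the zero locus in `k̄²` of the ideal `I_k(Δ)` of all polynomials with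
coefficients in `k` vanishing on `Δ`. -/
def hatSet (Δ : Set (Pt k)) : Set (Pt k) :=
  {q | ∀ P : MvPolynomial (Fin 2) k, (∀ x ∈ Δ, aeval x P = 0) → aeval q P = 0}

/-- Coordinatewise action of the Galois group `Gal(k̄/k)` on points of `k̄²`. -/
def galAct (g : AlgebraicClosure k ≃ₐ[k] AlgebraicClosure k) (q : Pt k) : Pt k :=
  fun i => g (q i)

/-- A subset of `k̄²` is Zariski closed iff it is the zero locus of an ideal of `k̄[x,y]`. -/
def IsZClosed (S : Set (Pt k)) : Prop :=
  ∃ I : Ideal (MvPolynomial (Fin 2) (AlgebraicClosure k)), S = zeroLocus (AlgebraicClosure k) I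

/-- Irreducibility with respect to the Zariski topology on `k̄²`. -/
def IsZIrreducible (S : Set (Pt k)) : Prop :=
  S.Nonempty ∧ ∀ Z₁ Z₂ : Set (Pt k), IsZClosed Z₁ → IsZClosed Z₂ → S ⊆ Z₁ ∪ Z₂ →
    (S ⊆ Z₁ ∨ S ⊆ Z₂)

/-- `C` is an irreducible component of `S` (for the Zariski topology on `k̄²`):
a maximal irreducible subset of `S`. -/
def IsIrredComponentOf (C S : Set (Pt k)) : Prop :=
  IsZIrreducible C ∧ C ⊆ S ∧ ∀ C' : Set (Pt k), IsZIrreducible C' → C' ⊆ S → C ⊆ C' → C = C'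

/-- The stabilizer `Aut(𝔸², Δ)` of a set of points of `k̄²`, as a set of plane automorphisms. -/
def stabSet (Δ : Set (Pt k)) : Set (PlaneAut k) :=
  {φ | actp φ '' Δ = Δ}

/-- The orbit `O_H(p)` of a point under a subgroup of plane automorphisms. -/
def orbSub (H : Subgroup (PlaneAut k)) (p : Pt k) : Set (Pt k) :=
  {q | ∃ h ∈ H, actp h p = q}

/-- The orbit `O_φ(p) = {φⁿ(p) : n ∈ ℤ}` of a point under a single plane automorphism. -/
def orbAut (φ : PlaneAut k) (p : Pt k) : Set (Pt k) :=
  {q | ∃ n : ℤ, actp (φ ^ n) p = q}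

/-- The degree of a plane automorphism: the maximum of the total degrees of the two
polynomials giving its point map. -/
def autDegree (φ : PlaneAut k) : ℕ :=
  max (φ.symm (X 0)).totalDegree (φ.symm (X 1)).totalDegree

/-- The torus `T = {(x,y) ↦ (t·x, t⁻¹·y) : t ∈ k*}`, as a set of plane automorphisms. -/
def torusT (k : Type*) [Field k] : Set (PlaneAut k) :=
  {φ | ∃ t : k, t ≠ 0 ∧ ∀ q : Pt k, actp φ q = ![emb k t * q 0, (emb k t)⁻¹ * q 1]}

end

/-!
Write `L` for the axis `x = 0`, `O` for the `φ`-orbit of `p` and `Cᵢ = {φ^(ℓn+i) p}`, so that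
`O` is the union of the finitely many cosets `Cᵢ`, each lying on the line `φⁱ(L)`. Since the
Zariski closure `Z(O)` contains the infinite set `L`, the orbit is infinite, so `n ↦ φⁿ p` is
injective and every `Cᵢ` is infinite. Restricted to `L`, the first coordinate of an automorphism
`χ` is a polynomial in `y`; hence two lines `χ(L)`, `χ'(L)` sharing infinitely many points
coincide, and `O ∩ φʲ(L) = Cⱼ`.

If `ψ` stabilizes `O`, write `ψ(φⁱ p) = φⁿ p` and `γ = φ⁻ⁿ ψ φⁱ`; then `γ` stabilizes `O` and fixes
`p`. The line `γ(L) ⊆ Z(O)` meets one of the lines `φʲ(L)` in infinitely many points, so equals it,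
whence `γ(C₀) ⊆ O ∩ φʲ(L) = Cⱼ`, and `Cⱼ = C₀` because both contain `p`. Applied to `γ⁻¹` as
well this gives `γ(C₀) = C₀`, and then `γ(L) = L`. Conversely, if for every `i < ℓ` we can write
`ψ = φⁿ γ φ⁻ⁱ` with `γ(C₀) = C₀`, then `ψ(Cᵢ) = Cₙ`; so `ψ` maps the finite set of cosets
injectively into itself, hence permutes it and stabilizes the union `O`.
-/

open Pointwise

section ZPowOrbit

variable {G X : Type*} [Group G] [MulAction G X]

lemma finite_range_zpow_smul_of_period_pos {φ : G} {p : X} (h : 0 < MulAction.period φ p) :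
    (Set.range fun n : ℤ => φ ^ n • p).Finite := by
  refine ((Set.finite_Ico (0 : ℤ) (MulAction.period φ p)).image fun n => φ ^ n • p).subset ?_
  rintro _ ⟨n, rfl⟩
  exact ⟨n % (MulAction.period φ p : ℤ),
    ⟨Int.emod_nonneg _ (by omega), Int.emod_lt_of_pos _ (by omega)⟩,
    MulAction.zpow_mod_period_smul n⟩

lemma injective_zpow_smul_of_infinite {φ : G} {p : X}
    (h : (Set.range fun n : ℤ => φ ^ n • p).Infinite) :
    Function.Injective fun n : ℤ => φ ^ n • p := by
  intro a b (hab : φ ^ a • p = φ ^ b • p)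
  have hper : MulAction.period φ p = 0 :=
    Nat.eq_zero_of_not_pos fun hpos => h (finite_range_zpow_smul_of_period_pos hpos)
  have hfix : φ ^ (-b + a) • p = p := by
    rw [zpow_add, mul_smul, hab, ← mul_smul, ← zpow_add, neg_add_cancel, zpow_zero, one_smul]
  have := MulAction.zpow_smul_eq_iff_period_dvd.mp hfix
  rw [hper, Nat.cast_zero, zero_dvd_iff] at this
  omega

lemma smul_range_zpow_smul (φ : G) (p : X) :
    φ • Set.range (fun n : ℤ => φ ^ n • p) = Set.range fun n : ℤ => φ ^ n • p := by
  rw [Set.smul_set_range]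
  conv_rhs => rw [← (Equiv.addLeft (1 : ℤ)).surjective.range_comp]
  simp only [Function.comp_def, Equiv.coe_addLeft, zpow_one_add, mul_smul]

lemma smul_sUnion_eq_of_mapsTo {𝒞 : Set (Set X)} (h𝒞 : 𝒞.Finite) {ψ : G}
    (hψ : ∀ C ∈ 𝒞, ψ • C ∈ 𝒞) : ψ • ⋃₀ 𝒞 = ⋃₀ 𝒞 := by
  have hbij := (h𝒞.injOn_iff_bijOn_of_mapsTo hψ).mp (MulAction.injective ψ).injOn
  rw [Set.smul_set_sUnion, ← Set.sUnion_image, hbij.image_eq]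

def orbitCoset (φ : G) (p : X) (ℓ : ℕ) (i : ℤ) : Set X :=
  Set.range fun n : ℤ => φ ^ (ℓ * n + i) • p

variable {φ : G} {p : X} {ℓ : ℕ}

lemma zpow_smul_mem_orbitCoset (i : ℤ) : φ ^ i • p ∈ orbitCoset φ p ℓ i :=
  ⟨0, by simp only [mul_zero, zero_add]⟩

lemma mem_orbitCoset_zero : p ∈ orbitCoset φ p ℓ 0 := by
  simpa using zpow_smul_mem_orbitCoset (φ := φ) (p := p) (ℓ := ℓ) 0

lemma orbitCoset_subset_range (i : ℤ) :
    orbitCoset φ p ℓ i ⊆ Set.range fun n : ℤ => φ ^ n • p := by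
  rintro _ ⟨n, rfl⟩
  exact ⟨_, rfl⟩

lemma range_zpow_smul_eq_sUnion_orbitCoset (φ : G) (p : X) (ℓ : ℕ) :
    Set.range (fun n : ℤ => φ ^ n • p) = ⋃₀ Set.range (orbitCoset φ p ℓ) := by
  refine Set.Subset.antisymm ?_
    (Set.sUnion_subset (Set.forall_mem_range.mpr orbitCoset_subset_range))
  rintro _ ⟨n, rfl⟩
  exact ⟨_, ⟨n, rfl⟩, zpow_smul_mem_orbitCoset n⟩

lemma orbitCoset_zero_eq_range_zpow_smul :
    orbitCoset φ p ℓ 0 = Set.range fun n : ℤ => (φ ^ ℓ) ^ n • p := by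
  simp only [orbitCoset, add_zero, zpow_mul, zpow_natCast]

lemma smul_orbitCoset (m i : ℤ) : φ ^ m • orbitCoset φ p ℓ i = orbitCoset φ p ℓ (i + m) := by
  rw [orbitCoset, Set.smul_set_range]
  simp only [smul_smul, ← zpow_add, orbitCoset, add_assoc, add_comm m]

lemma orbitCoset_eq_range_of_mem {i : ℤ} {q : X} (hq : q ∈ orbitCoset φ p ℓ i) :
    orbitCoset φ p ℓ i = Set.range fun n : ℤ => (φ ^ ℓ) ^ n • q := by
  obtain ⟨a, rfl⟩ := hq
  rw [orbitCoset, ← (Equiv.addRight a).surjective.range_comp]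
  congr 1
  funext n
  simp only [Function.comp_apply, Equiv.coe_addRight, smul_smul, ← zpow_natCast, ← zpow_mul,
    ← zpow_add]
  ring_nf

lemma orbitCoset_eq_of_mem {i j : ℤ} {q : X} (hi : q ∈ orbitCoset φ p ℓ i)
    (hj : q ∈ orbitCoset φ p ℓ j) : orbitCoset φ p ℓ i = orbitCoset φ p ℓ j := by
  rw [orbitCoset_eq_range_of_mem hi, orbitCoset_eq_range_of_mem hj]

lemma orbitCoset_emod (i : ℤ) : orbitCoset φ p ℓ (i % ℓ) = orbitCoset φ p ℓ i :=
  orbitCoset_eq_of_mem ⟨i / ℓ, by simp only [Int.mul_ediv_add_emod]⟩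
    (zpow_smul_mem_orbitCoset i)

lemma finite_range_orbitCoset (hℓ : ℓ ≠ 0) : (Set.range (orbitCoset φ p ℓ)).Finite := by
  refine ((Set.finite_Ico (0 : ℤ) ℓ).image (orbitCoset φ p ℓ)).subset ?_
  rintro _ ⟨i, rfl⟩
  exact ⟨i % ℓ, ⟨Int.emod_nonneg _ (by omega), Int.emod_lt_of_pos _ (by omega)⟩, orbitCoset_emod i⟩

lemma orbitCoset_infinite (hinj : Function.Injective fun n : ℤ => φ ^ n • p) (hℓ : ℓ ≠ 0)
    (i : ℤ) : (orbitCoset φ p ℓ i).Infinite := by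
  refine Set.infinite_range_of_injective (hinj.comp fun a b hab => ?_)
  have : (ℓ : ℤ) * a = ℓ * b := by simpa using hab
  exact mul_left_cancel₀ (by exact_mod_cast hℓ) this

lemma orbitCoset_subset_of_mem {S : Set X} (hS : φ ^ ℓ • S = S) {i : ℤ} {q : X}
    (hq : q ∈ orbitCoset φ p ℓ i) (hqS : q ∈ S) : orbitCoset φ p ℓ i ⊆ S := by
  rw [orbitCoset_eq_range_of_mem hq]
  rintro _ ⟨n, rfl⟩
  have : (φ ^ ℓ) ^ n ∈ MulAction.stabilizer G S :=
    Subgroup.zpow_mem _ (MulAction.mem_stabilizer_iff.mpr hS) n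
  rw [← MulAction.mem_stabilizer_iff.mp this]
  exact Set.smul_mem_smul_set hqS

lemma pow_smul_zpow_smul_eq {S : Set X} (hS : φ ^ ℓ • S = S) (i : ℤ) :
    φ ^ ℓ • φ ^ i • S = φ ^ i • S := by
  rw [smul_smul, ← zpow_natCast, zpow_mul_comm, mul_smul, zpow_natCast, hS]

lemma exists_eq_zpow_mul_mul_inv {ψ : G}
    (hψ : ψ • Set.range (fun n : ℤ => φ ^ n • p) = Set.range fun n : ℤ => φ ^ n • p) (i : ℕ) :
    ∃ (n : ℤ) (γ : G),
      (γ • Set.range (fun n : ℤ => φ ^ n • p) = Set.range fun n : ℤ => φ ^ n • p) ∧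
        γ • p = p ∧ ψ = φ ^ n * γ * (φ ^ i)⁻¹ := by
  obtain ⟨n, hn⟩ : ψ • φ ^ i • p ∈ Set.range fun n : ℤ => φ ^ n • p := by
    rw [← hψ]
    exact Set.smul_mem_smul_set ⟨i, zpow_natCast φ i ▸ rfl⟩
  have hφ : φ ∈ MulAction.stabilizer G (Set.range fun n : ℤ => φ ^ n • p) :=
    smul_range_zpow_smul φ p
  refine ⟨n, φ ^ (-n) * ψ * φ ^ i, ?_, ?_, by group⟩
  · exact Subgroup.mul_mem _ (Subgroup.mul_mem _ (Subgroup.zpow_mem _ hφ _) hψ)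
      (Subgroup.pow_mem _ hφ _)
  · rw [mul_smul, mul_smul, ← hn, ← mul_smul, ← zpow_add, neg_add_cancel, zpow_zero, one_smul]

lemma smul_range_zpow_smul_eq_of_forall {ψ : G} (hℓ : ℓ ≠ 0)
    (hψ : ∀ i < ℓ, ∃ (n : ℤ) (γ : G),
      γ • orbitCoset φ p ℓ 0 = orbitCoset φ p ℓ 0 ∧ ψ = φ ^ n * γ * (φ ^ i)⁻¹) :
    ψ • Set.range (fun n : ℤ => φ ^ n • p) = Set.range fun n : ℤ => φ ^ n • p := by
  rw [range_zpow_smul_eq_sUnion_orbitCoset φ p ℓ]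
  refine smul_sUnion_eq_of_mapsTo (finite_range_orbitCoset hℓ)
    (Set.forall_mem_range.mpr fun i => ?_)
  have hi₀ : 0 ≤ i % ℓ := Int.emod_nonneg i (by omega)
  have hi₁ : i % ℓ < ℓ := Int.emod_lt_of_pos i (by omega)
  obtain ⟨j, hj⟩ : ∃ j : ℕ, (j : ℤ) = i % ℓ := ⟨_, Int.toNat_of_nonneg hi₀⟩
  obtain ⟨n, γ, hγ, rfl⟩ := hψ j (by omega)
  refine ⟨n, ?_⟩
  rw [← orbitCoset_emod i, ← hj, mul_smul, mul_smul, ← zpow_natCast, ← zpow_neg, smul_orbitCoset,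
    add_neg_cancel, hγ, smul_orbitCoset, zero_add]

end ZPowOrbit

section Plane

variable {k : Type*} [Field k]

lemma aeval_actp (χ : PlaneAut k) (q : Pt k) (P : MvPolynomial (Fin 2) k) :
    aeval (actp χ q) P = aeval q (χ.symm P) := by
  have : (aeval (actp χ q) : MvPolynomial (Fin 2) k →ₐ[k] AlgebraicClosure k)
      = (aeval q).comp χ.symm.toAlgHom :=
    MvPolynomial.algHom_ext fun i => by simp [actp]
  exact DFunLike.congr_fun this P

noncomputable instance : MulAction (PlaneAut k) (Pt k) where
  smul := actp
  one_smul q := funext fun i => by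
    show aeval q (AlgEquiv.refl.symm (X i)) = q i
    simp
  mul_smul ψ χ q := funext fun i => by
    show aeval q ((ψ * χ).symm (X i)) = aeval (actp χ q) (ψ.symm (X i))
    rw [aeval_actp]
    rfl

lemma aeval_smul (χ : PlaneAut k) (q : Pt k) (P : MvPolynomial (Fin 2) (AlgebraicClosure k)) :
    aeval (χ • q) P = aeval q (bind₁ (fun i => map (emb k) (χ.symm (X i))) P) := by
  rw [aeval_bind₁]
  congr 2 with i
  rw [aeval_map_algebraMap]
  rfl

lemma smul_zclos_subset (χ : PlaneAut k) (Δ : Set (Pt k)) : χ • zclos Δ ⊆ zclos (χ • Δ) := by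
  rintro _ ⟨q, hq, rfl⟩ P hP
  rw [mem_vanishingIdeal_iff] at hP
  refine (aeval_smul χ q P).trans (hq _ ((mem_vanishingIdeal_iff).mpr fun x hx => ?_))
  rw [← aeval_smul]
  exact hP _ (Set.smul_mem_smul_set hx)

def yAxis (k : Type*) [Field k] : Set (Pt k) := {q | q 0 = 0}

lemma eq_vecCons_of_mem_yAxis {q : Pt k} (hq : q ∈ yAxis k) : q = ![0, q 1] := by
  funext i
  fin_cases i
  · exact hq
  · rfl

lemma vecCons_mem_yAxis (y : AlgebraicClosure k) : (![0, y] : Pt k) ∈ yAxis k := rfl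

lemma yAxis_infinite : (yAxis k).Infinite := by
  refine Set.infinite_of_injective_forall_mem (fun a b h => ?_) vecCons_mem_yAxis
  simpa using congrFun h 1

lemma yAxis_not_subset_zclos_of_finite {S : Set (Pt k)} (hS : S.Finite) :
    ¬ yAxis k ⊆ zclos S := by
  classical
  intro h
  let P : MvPolynomial (Fin 2) (AlgebraicClosure k) := ∏ q ∈ hS.toFinset, (X 1 - C (q 1))
  have hP : P ∈ vanishingIdeal (AlgebraicClosure k) S := by
    rw [mem_vanishingIdeal_iff]
    intro q hq
    simp only [P, map_prod, map_sub, aeval_X, aeval_C]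
    exact Finset.prod_eq_zero (hS.mem_toFinset.mpr hq) (sub_self _)
  obtain ⟨y, hy⟩ := Infinite.exists_notMem_finset (hS.toFinset.image fun q => q 1)
  have hPy : aeval ![0, y] P = 0 := h (vecCons_mem_yAxis y) P hP
  simp only [P, map_prod, map_sub, aeval_X, aeval_C, Matrix.cons_val_one, Algebra.algebraMap_self,
    RingHom.id_apply] at hPy
  obtain ⟨q, hq, hqy⟩ := Finset.prod_eq_zero_iff.mp hPy
  exact hy (Finset.mem_image.mpr ⟨q, hq, (sub_eq_zero.mp hqy).symm⟩)

lemma aeval_vecCons_eq_zero_of_infinite {P : MvPolynomial (Fin 2) k}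
    (h : {y : AlgebraicClosure k | aeval ![0, y] P = 0}.Infinite) (y : AlgebraicClosure k) :
    aeval ![0, y] P = 0 := by
  let u : Polynomial (AlgebraicClosure k) := aeval ![0, Polynomial.X] P
  have hu : ∀ y, u.eval y = aeval ![0, y] P := fun y => by
    rw [← Polynomial.coe_aeval_eq_eval, ← AlgHom.restrictScalars_apply k, ← AlgHom.comp_apply,
      comp_aeval]
    congr 2 with i
    fin_cases i <;> simp
  have hu0 : u = 0 := Polynomial.eq_zero_of_infinite_isRoot u (by simpa [Polynomial.IsRoot, hu])
  rw [← hu, hu0, Polynomial.eval_zero]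

lemma smul_yAxis_subset_of_infinite_inter {χ : PlaneAut k}
    (h : (χ • yAxis k ∩ yAxis k).Infinite) : χ • yAxis k ⊆ yAxis k := by
  have hsub : χ • yAxis k ∩ yAxis k ⊆
      (fun y => χ • ![0, y]) '' {y | aeval ![0, y] (χ.symm (X 0)) = 0} := by
    rintro _ ⟨⟨q, hq, rfl⟩, hχq⟩
    refine ⟨q 1, ?_, by simp only [← eq_vecCons_of_mem_yAxis hq]⟩
    show aeval ![0, q 1] _ = 0
    rwa [← eq_vecCons_of_mem_yAxis hq]
  rintro _ ⟨q, hq, rfl⟩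
  rw [eq_vecCons_of_mem_yAxis hq]
  exact aeval_vecCons_eq_zero_of_infinite ((h.mono hsub).of_image _) _

lemma smul_yAxis_eq_of_infinite_inter {χ χ' : PlaneAut k}
    (h : (χ • yAxis k ∩ χ' • yAxis k).Infinite) : χ • yAxis k = χ' • yAxis k := by
  have key : ∀ a b : PlaneAut k, (a • yAxis k ∩ b • yAxis k).Infinite →
      a • yAxis k ⊆ b • yAxis k := fun a b hab => by
    rw [Set.subset_smul_set_iff, smul_smul]
    refine smul_yAxis_subset_of_infinite_inter ?_
    have : (b⁻¹ * a) • yAxis k ∩ yAxis k = b⁻¹ • (a • yAxis k ∩ b • yAxis k) := by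
      rw [Set.smul_set_inter, inv_smul_smul, smul_smul]
    rw [this]
    exact hab.image (MulAction.injective _).injOn
  exact (key χ χ' h).antisymm (key χ' χ (Set.inter_comm _ _ ▸ h))

end Plane

section AxisOrbit

variable {k : Type*} [Field k] {φ : PlaneAut k} {p : Pt k} {ℓ : ℕ}

lemma orbAut_eq_range (φ : PlaneAut k) (p : Pt k) :
    orbAut φ p = Set.range fun n : ℤ => φ ^ n • p := rfl

lemma mem_stabSet_iff {ψ : PlaneAut k} {Δ : Set (Pt k)} : ψ ∈ stabSet Δ ↔ ψ • Δ = Δ := Iff.rfl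

lemma yAxis_subset_zclos_orbAut (hℓ : ℓ ≠ 0)
    (hcl : zclos (orbAut φ p) = ⋃ i ∈ Finset.range ℓ, φ ^ i • yAxis k) :
    yAxis k ⊆ zclos (orbAut φ p) := fun q hq => by
  rw [hcl]
  exact Set.mem_biUnion (Finset.mem_range.mpr (Nat.pos_of_ne_zero hℓ))
    (by rwa [pow_zero, one_smul])

lemma injective_zpow_smul_of_yAxis_subset_zclos (h : yAxis k ⊆ zclos (orbAut φ p)) :
    Function.Injective fun n : ℤ => φ ^ n • p :=
  injective_zpow_smul_of_infinite fun hfin => yAxis_not_subset_zclos_of_finite hfin h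

lemma orbitCoset_subset_zpow_smul_yAxis (hp : p ∈ yAxis k) (hst : φ ^ ℓ • yAxis k = yAxis k)
    (i : ℤ) : orbitCoset φ p ℓ i ⊆ φ ^ i • yAxis k :=
  orbitCoset_subset_of_mem (pow_smul_zpow_smul_eq hst i) (zpow_smul_mem_orbitCoset i)
    (Set.smul_mem_smul_set hp)

lemma orbitCoset_zero_subset_yAxis (hp : p ∈ yAxis k) (hst : φ ^ ℓ • yAxis k = yAxis k) :
    orbitCoset φ p ℓ 0 ⊆ yAxis k := by
  simpa using orbitCoset_subset_zpow_smul_yAxis hp hst 0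

lemma orbAut_inter_pow_smul_yAxis_subset (hinj : Function.Injective fun n : ℤ => φ ^ n • p)
    (hp : p ∈ yAxis k) (hst : φ ^ ℓ • yAxis k = yAxis k)
    (hdist : ∀ i < ℓ, ∀ j < ℓ, φ ^ i • yAxis k = φ ^ j • yAxis k → i = j) (hℓ : ℓ ≠ 0)
    {j : ℕ} (hj : j < ℓ) : orbAut φ p ∩ φ ^ j • yAxis k ⊆ orbitCoset φ p ℓ j := by
  rintro _ ⟨⟨m, rfl⟩, hm⟩
  obtain ⟨r, hr⟩ : ∃ r : ℕ, (r : ℤ) = m % ℓ :=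
    ⟨_, Int.toNat_of_nonneg (Int.emod_nonneg m (by omega))⟩
  have hrℓ : r < ℓ := by
    have := Int.emod_lt_of_pos m (by omega : (0 : ℤ) < ℓ)
    omega
  have hmr : φ ^ m • p ∈ orbitCoset φ p ℓ r := by
    rw [hr, orbitCoset_emod]
    exact zpow_smul_mem_orbitCoset m
  -- the coset of `m` lies on both lines, so they share infinitely many points
  have hsub : orbitCoset φ p ℓ r ⊆ φ ^ r • yAxis k ∩ φ ^ j • yAxis k := by
    refine Set.subset_inter ?_ (orbitCoset_subset_of_mem ?_ hmr hm)
    · simpa only [zpow_natCast] using orbitCoset_subset_zpow_smul_yAxis hp hst r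
    · simpa only [zpow_natCast] using pow_smul_zpow_smul_eq hst j
  have hrj : r = j :=
    hdist r hrℓ j hj (smul_yAxis_eq_of_infinite_inter ((orbitCoset_infinite hinj hℓ r).mono hsub))
  rwa [← hrj]

lemma smul_orbitCoset_zero_subset (hinj : Function.Injective fun n : ℤ => φ ^ n • p)
    (hp : p ∈ yAxis k) (hst : φ ^ ℓ • yAxis k = yAxis k)
    (hdist : ∀ i < ℓ, ∀ j < ℓ, φ ^ i • yAxis k = φ ^ j • yAxis k → i = j) (hℓ : ℓ ≠ 0)
    (hcl : zclos (orbAut φ p) = ⋃ i ∈ Finset.range ℓ, φ ^ i • yAxis k) {γ : PlaneAut k}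
    (hγO : γ • orbAut φ p = orbAut φ p) (hγp : γ • p = p) :
    γ • orbitCoset φ p ℓ 0 ⊆ orbitCoset φ p ℓ 0 := by
  have hγL : γ • yAxis k ⊆ ⋃ j ∈ Finset.range ℓ, φ ^ j • yAxis k := by
    rw [← hcl]
    refine (Set.smul_set_mono (yAxis_subset_zclos_orbAut hℓ hcl)).trans ?_
    simpa only [hγO] using smul_zclos_subset γ (orbAut φ p)
  obtain ⟨j, hj, hjinf⟩ : ∃ j ∈ Finset.range ℓ, (γ • yAxis k ∩ φ ^ j • yAxis k).Infinite := by
    by_contra! hfin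
    refine (yAxis_infinite.image (MulAction.injective γ).injOn) <|
      ((Finset.range ℓ).finite_toSet.biUnion fun j hj => hfin j hj).subset fun q hq => ?_
    obtain ⟨j, hj, hqj⟩ := Set.mem_iUnion₂.mp (hγL hq)
    exact Set.mem_biUnion hj ⟨hq, hqj⟩
  have hsub : γ • orbitCoset φ p ℓ 0 ⊆ orbitCoset φ p ℓ j :=
    calc γ • orbitCoset φ p ℓ 0
        ⊆ γ • (orbAut φ p ∩ yAxis k) :=
          Set.smul_set_mono (Set.subset_inter (orbitCoset_subset_range 0)
            (orbitCoset_zero_subset_yAxis hp hst))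
      _ = orbAut φ p ∩ φ ^ j • yAxis k := by
          rw [Set.smul_set_inter, hγO, smul_yAxis_eq_of_infinite_inter hjinf]
      _ ⊆ orbitCoset φ p ℓ j :=
          orbAut_inter_pow_smul_yAxis_subset hinj hp hst hdist hℓ (Finset.mem_range.mp hj)
  rwa [orbitCoset_eq_of_mem (hsub ⟨p, mem_orbitCoset_zero, hγp⟩) mem_orbitCoset_zero] at hsub

lemma smul_orbitCoset_zero_eq (hinj : Function.Injective fun n : ℤ => φ ^ n • p)
    (hp : p ∈ yAxis k) (hst : φ ^ ℓ • yAxis k = yAxis k)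
    (hdist : ∀ i < ℓ, ∀ j < ℓ, φ ^ i • yAxis k = φ ^ j • yAxis k → i = j) (hℓ : ℓ ≠ 0)
    (hcl : zclos (orbAut φ p) = ⋃ i ∈ Finset.range ℓ, φ ^ i • yAxis k) {γ : PlaneAut k}
    (hγO : γ • orbAut φ p = orbAut φ p) (hγp : γ • p = p) :
    γ • orbitCoset φ p ℓ 0 = orbitCoset φ p ℓ 0 :=
  (smul_orbitCoset_zero_subset hinj hp hst hdist hℓ hcl hγO hγp).antisymm
    (Set.subset_smul_set_iff.mpr (smul_orbitCoset_zero_subset hinj hp hst hdist hℓ hcl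
      (inv_smul_eq_iff.mpr hγO.symm) (inv_smul_eq_iff.mpr hγp.symm)))

lemma smul_yAxis_eq_self_of_smul_orbitCoset (hinj : Function.Injective fun n : ℤ => φ ^ n • p)
    (hp : p ∈ yAxis k) (hst : φ ^ ℓ • yAxis k = yAxis k) (hℓ : ℓ ≠ 0) {γ : PlaneAut k}
    (hγ : γ • orbitCoset φ p ℓ 0 = orbitCoset φ p ℓ 0) : γ • yAxis k = yAxis k := by
  have hC := orbitCoset_zero_subset_yAxis hp hst
  have hsub : orbitCoset φ p ℓ 0 ⊆ γ • yAxis k ∩ (1 : PlaneAut k) • yAxis k := by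
    rw [one_smul]
    exact Set.subset_inter (by rw [← hγ]; exact Set.smul_set_mono hC) hC
  simpa using smul_yAxis_eq_of_infinite_inter ((orbitCoset_infinite hinj hℓ 0).mono hsub)

end AxisOrbit

theorem stmt_18_general (k : Type*) [Field k] (p : Pt k) (hp : p 0 = 0)
    (φ : PlaneAut k) (ℓ : ℕ) (hℓ : 1 ≤ ℓ)
    (hst : actp (φ ^ ℓ) '' {q : Pt k | q 0 = 0} = {q : Pt k | q 0 = 0})
    (hdist : ∀ i < ℓ, ∀ j < ℓ,
      actp (φ ^ i) '' {q : Pt k | q 0 = 0} = actp (φ ^ j) '' {q : Pt k | q 0 = 0} → i = j)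
    (hcl : zclos (orbAut φ p) = ⋃ i ∈ Finset.range ℓ, actp (φ ^ i) '' {q : Pt k | q 0 = 0}) :
    stabSet (orbAut φ p) = ⋂ i ∈ Finset.range ℓ,
      {ψ : PlaneAut k | ∃ (n : ℤ) (γ : PlaneAut k),
        (actp γ '' {q : Pt k | q 0 = 0} = {q : Pt k | q 0 = 0} ∧ actp γ p = p) ∧
        γ ∈ stabSet (orbAut (φ ^ ℓ) p) ∧
        ψ = φ ^ n * γ * (φ ^ i)⁻¹} := by
  have hℓ₀ : ℓ ≠ 0 := by omega
  have hinj := injective_zpow_smul_of_yAxis_subset_zclos (yAxis_subset_zclos_orbAut hℓ₀ hcl)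
  ext ψ
  simp only [Set.mem_iInter, Finset.mem_range, Set.mem_ofPred_eq, mem_stabSet_iff,
    orbAut_eq_range, ← orbitCoset_zero_eq_range_zpow_smul]
  constructor
  · intro hψ i _
    obtain ⟨n, γ, hγO, hγp, rfl⟩ := exists_eq_zpow_mul_mul_inv hψ i
    have hγC := smul_orbitCoset_zero_eq hinj hp hst hdist hℓ₀ hcl hγO hγp
    exact ⟨n, γ, ⟨smul_yAxis_eq_self_of_smul_orbitCoset hinj hp hst hℓ₀ hγC, hγp⟩, hγC, rfl⟩
  · intro hψ
    refine smul_range_zpow_smul_eq_of_forall hℓ₀ fun i hi => ?_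
    obtain ⟨n, γ, -, hγB, rfl⟩ := hψ i hi
    exact ⟨n, γ, hγB, rfl⟩

/-- Let `L = {x = 0}` and `p ∈ L`. If `φ^ℓ(L) = L`, the sets
`φ^i(L)` (`0 ≤ i ≤ ℓ−1`) are pairwise distinct and the Zariski closure of `O_φ(p)` is
their union, then, with `G_p` the stabilizer of `L` fixing `p` and
`B = Aut(𝔸², O_{φ^ℓ}(p))`, we have
`Aut(𝔸², O_φ(p)) = ⋂_{i=0}^{ℓ−1} {φⁿ∘γ∘φ^{−i} : n ∈ ℤ, γ ∈ G_p ∩ B}`. -/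
theorem stmt_18 (k : Type*) [Field k] [PerfectField k] (p : Pt k) (hp : p 0 = 0)
    (φ : PlaneAut k) (ℓ : ℕ) (hℓ : 1 ≤ ℓ)
    (hst : actp (φ ^ ℓ) '' {q : Pt k | q 0 = 0} = {q : Pt k | q 0 = 0})
    (hdist : ∀ i < ℓ, ∀ j < ℓ,
      actp (φ ^ i) '' {q : Pt k | q 0 = 0} = actp (φ ^ j) '' {q : Pt k | q 0 = 0} → i = j)
    (hcl : zclos (orbAut φ p) = ⋃ i ∈ Finset.range ℓ, actp (φ ^ i) '' {q : Pt k | q 0 = 0}) :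
    stabSet (orbAut φ p) = ⋂ i ∈ Finset.range ℓ,
      {ψ : PlaneAut k | ∃ (n : ℤ) (γ : PlaneAut k),
        (actp γ '' {q : Pt k | q 0 = 0} = {q : Pt k | q 0 = 0} ∧ actp γ p = p) ∧
        γ ∈ stabSet (orbAut (φ ^ ℓ) p) ∧
        ψ = φ ^ n * γ * (φ ^ i)⁻¹} :=
  stmt_18_general k p hp φ ℓ hℓ hst hdist hcl
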